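/- Let y be a process such that each y_τ is 𝓕_τ-measurable and integrable, and y_τ = φ_0(τ) + Σ_{m=1}^p φ_m(τ) y_{τ−m} + ε_τ almost surely for every τ ∈ ℤ. Then for every t ∈ ℤ and every integer N ≥ 1, the mean square error of the N-step-ahead predictor is E[(y_t − E[y_t | 𝓕_{t−N}])²] = Σ_{r=0}^{N−1} ξ_{t,r}² σ_{t−r}². -/

import Mathlib

/-!
Unrolling the recursion `N` times writes `y_t` as an `𝓕_{t-N}`-measurable part plus the noise
part `∑_{r<N} ξ_{t,r} ε_{t-r}`. That the coefficients are the determinants `ξ_{t,r}` comes from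
the recurrence `ξ_{t,k} = ∑_m φ_m(t-k+m) ξ_{t,k-m}`, the Laplace expansion of `det Φ_{t,k}` along
its first column. Conditioning on `𝓕_{t-N}` kills the noise part, so the prediction error is the
noise part itself; martingale differences at distinct times are orthogonal in `L²`, which turns
its mean square into `∑_{r<N} ξ_{t,r}² σ_{t-r}²`.
-/

open Finset

/-- The `k × k` solution matrix `Φ_{t,k}`: its (1-based) `(i,j)` entry is `-1` if `i = j-1`,
`φ_{1+i−j}(t−k+i)` if `0 ≤ i−j ≤ p−1`, and `0` otherwise. -/
noncomputable def PhiMat (p : ℕ) (φ : ℕ → ℤ → ℝ) (t : ℤ) (k : ℕ) :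
    Matrix (Fin k) (Fin k) ℝ :=
  fun i j =>
    if (i : ℕ) + 1 = (j : ℕ) then -1
    else if (j : ℕ) ≤ (i : ℕ) ∧ (i : ℕ) - (j : ℕ) + 1 ≤ p then
      φ ((i : ℕ) - (j : ℕ) + 1) (t - (k : ℤ) + (i : ℕ) + 1)
    else 0

/-- The Hessenbergian (Green function) `ξ_{t,k} = det Φ_{t,k}`, with the conventions
`ξ_{t,0} = 1` (empty determinant) and `ξ_{t,k} = 0` for `k < 0`. -/
noncomputable def xi (p : ℕ) (φ : ℕ → ℤ → ℝ) (t : ℤ) (k : ℤ) : ℝ :=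
  if 0 ≤ k then (PhiMat p φ t k.toNat).det else 0

open MeasureTheory Filter

lemma Fin.val_succAbove_eq_ite {n : ℕ} (i : Fin (n + 1)) (a : Fin n) :
    (i.succAbove a : ℕ) = if (a : ℕ) < i then (a : ℕ) else (a : ℕ) + 1 := by
  simp only [Fin.succAbove, Fin.lt_def, Fin.val_castSucc]
  split_ifs <;> simp

section Hessenbergian

variable (p : ℕ) (φ : ℕ → ℤ → ℝ) (t : ℤ)

lemma xi_natCast (k : ℕ) : xi p φ t k = (PhiMat p φ t k).det := by
  simp [xi]

lemma xi_zero : xi p φ t 0 = 1 := by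
  simp [xi]

lemma xi_of_neg {k : ℤ} (hk : k < 0) : xi p φ t k = 0 := by
  simp [xi, hk.not_ge]

/-- Deleting row `i` and the first column of `Φ_{t,k+1}` leaves a block lower-triangular matrix:
an `i × i` triangle with `-1` on the diagonal, followed by `Φ_{t,k-i}`. -/
lemma det_PhiMat_submatrix_succAbove_succ (k : ℕ) (i : Fin (k + 1)) :
    ((PhiMat p φ t (k + 1)).submatrix i.succAbove Fin.succ).det
      = (-1) ^ (i : ℕ) * (PhiMat p φ t (k - i)).det := by
  have hik := i.is_lt
  have hk : (i : ℕ) + (k - i) = k := by omega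
  set e := finSumFinEquiv.trans (finCongr hk)
  set M := ((PhiMat p φ t (k + 1)).submatrix i.succAbove Fin.succ).submatrix e e with hM
  have h₁₁ : M.toBlocks₁₁.BlockTriangular OrderDual.toDual := by
    intro a b (hab : a < b)
    simp [hM, Matrix.toBlocks₁₁, PhiMat, Fin.val_succAbove_eq_ite, e]
    split_ifs <;> first | rfl | omega
  have h₁₂ : M.toBlocks₁₂ = 0 := by
    ext a b
    simp [hM, Matrix.toBlocks₁₂, PhiMat, Fin.val_succAbove_eq_ite, e]
    split_ifs <;> first | rfl | omega
  have h₂₂ : M.toBlocks₂₂ = PhiMat p φ t (k - i) := by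
    ext a b
    simp [hM, Matrix.toBlocks₂₂, PhiMat, Fin.val_succAbove_eq_ite, e]
    split_ifs <;> first | rfl | omega | (congr 1 <;> omega)
  rw [← Matrix.det_submatrix_equiv_self e, ← hM, ← M.fromBlocks_toBlocks, h₁₂, h₂₂,
    Matrix.det_fromBlocks_zero₁₂, Matrix.det_of_isLowerTriangular _ h₁₁]
  simp [hM, Matrix.toBlocks₁₁, PhiMat, Fin.val_succAbove_eq_ite, e]

lemma PhiMat_succ_apply_zero (k : ℕ) (i : Fin (k + 1)) :
    PhiMat p φ t (k + 1) i 0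
      = if (i : ℕ) + 1 ≤ p then φ (i + 1) (t - (k + 1 : ℕ) + (i + 1 : ℕ)) else 0 := by
  simp only [PhiMat, Fin.val_zero, Nat.add_one_ne_zero, if_false, zero_le, true_and, Nat.sub_zero]
  push_cast
  ring_nf

lemma xi_natCast_eq_sum {n : ℕ} (hn : 0 < n) :
    xi p φ t n = ∑ m ∈ Icc 1 p, φ m (t - n + m) * xi p φ t (n - m) := by
  obtain ⟨k, rfl⟩ := Nat.exists_eq_add_one_of_ne_zero hn.ne'
  set F : ℕ → ℝ := fun m => φ m (t - (k + 1 : ℕ) + m) * xi p φ t ((k + 1 : ℕ) - m) with hF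
  have hF_eq_zero {m : ℕ} (hm : k + 1 < m) : F m = 0 := by
    simp only [hF]
    rw [xi_of_neg _ _ _ (by omega), mul_zero]
  have hterm (i : Fin (k + 1)) : (-1) ^ (i : ℕ) * PhiMat p φ t (k + 1) i 0
      * ((PhiMat p φ t (k + 1)).submatrix i.succAbove Fin.succ).det
        = if (i : ℕ) + 1 ≤ p then F (i + 1) else 0 := by
    have hsign : ((-1 : ℝ) ^ (i : ℕ)) * (-1) ^ (i : ℕ) = 1 := by
      rw [← mul_pow]; norm_num
    have hxi : (PhiMat p φ t (k - i)).det = xi p φ t ((k + 1 : ℕ) - (i + 1 : ℕ)) := by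
      rw [← xi_natCast]; congr 1; omega
    rw [det_PhiMat_submatrix_succAbove_succ, PhiMat_succ_apply_zero, hxi]
    split_ifs
    · linear_combination F (i + 1) * hsign
    · simp
  -- Laplace expansion along the first column: the signs of the minors cancel the cofactor signs.
  calc xi p φ t (k + 1 : ℕ)
      = ∑ i ∈ range (k + 1), if i + 1 ≤ p then F (i + 1) else 0 := by
        rw [xi_natCast, Matrix.det_succ_column_zero, ← Fin.sum_univ_eq_sum_range]
        exact sum_congr rfl fun i _ => hterm i
    _ = ∑ m ∈ Icc 1 (k + 1) with m ≤ p, F m := by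
        rw [sum_filter, ← Ico_add_one_right_eq_Icc, sum_Ico_eq_sum_range]
        simp only [add_tsub_cancel_right, add_comm 1]
    _ = ∑ m ∈ Icc 1 p, F m := by
        refine sum_subset (fun m => by simp only [mem_filter, mem_Icc]; omega)
          fun m hm hm' => hF_eq_zero ?_
        simp only [mem_Icc, mem_filter, not_and, not_le] at hm hm'
        omega
    _ = _ := by simp [hF]

end Hessenbergian

lemma Finset.sum_Icc_one_eq_add_sum_Icc_succ {M : Type*} [AddCommMonoid M] (p : ℕ) {g : ℕ → M}
    (hg : g (p + 1) = 0) : ∑ j ∈ Icc 1 p, g j = g 1 + ∑ j ∈ Icc 1 p, g (j + 1) := by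
  have h := sum_range_succ' (fun i => g (1 + i)) p
  rw [sum_range_succ, add_comm 1 p, hg, add_zero] at h
  simp only [← Ico_add_one_right_eq_Icc, sum_Ico_eq_sum_range, add_tsub_cancel_right, h,
    add_zero, add_assoc]
  exact add_comm _ _

section Unrolling

variable (p : ℕ) (φ : ℕ → ℤ → ℝ) (t : ℤ)

/-- The coefficient of `x_{t-N+1-j}` when the recursion for `x_t` is unrolled `N` times. -/
noncomputable def tailCoeff (N j : ℕ) : ℝ :=
  ∑ m ∈ Icc j p, φ m (t - N + 1 + m - j) * xi p φ t (N - 1 - m + j)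

lemma tailCoeff_one {j : ℕ} (hj : j ≤ p) : tailCoeff p φ t 1 j = φ j t := by
  rw [tailCoeff, sum_eq_single_of_mem j (mem_Icc.2 ⟨le_rfl, hj⟩)]
  · simp [xi_zero]
  · intro m hm hmj
    rw [xi_of_neg _ _ _ (by have := (mem_Icc.1 hm).1; omega), mul_zero]

lemma tailCoeff_succ (N : ℕ) {j : ℕ} (hj : j ≤ p) :
    tailCoeff p φ t (N + 1) j = xi p φ t N * φ j (t - N) + tailCoeff p φ t N (j + 1) := by
  rw [tailCoeff, ← add_sum_Ioc_eq_sum_Icc hj, ← Icc_add_one_left_eq_Ioc, tailCoeff]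
  push_cast
  ring_nf

lemma tailCoeff_one_right {N : ℕ} (hN : 0 < N) : tailCoeff p φ t N 1 = xi p φ t N := by
  rw [tailCoeff, xi_natCast_eq_sum _ _ _ hN]
  refine sum_congr rfl fun m _ => ?_
  push_cast
  ring_nf

lemma tailCoeff_of_lt (N : ℕ) {j : ℕ} (hj : p < j) : tailCoeff p φ t N j = 0 := by
  rw [tailCoeff, Icc_eq_empty_of_lt hj, sum_empty]

theorem eq_sum_xi_add_sum_tailCoeff {x e : ℤ → ℝ}
    (hx : ∀ τ, x τ = φ 0 τ + ∑ m ∈ Icc 1 p, φ m τ * x (τ - m) + e τ) {N : ℕ} (hN : 1 ≤ N) :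
    x t = (∑ r ∈ range N, xi p φ t r * φ 0 (t - r)
        + ∑ j ∈ Icc 1 p, tailCoeff p φ t N j * x (t - N + 1 - j))
      + ∑ r ∈ range N, xi p φ t r * e (t - r) := by
  induction N, hN using Nat.le_induction with
  | base =>
    have htail : ∑ j ∈ Icc 1 p, tailCoeff p φ t 1 j * x (t - (1 : ℕ) + 1 - j)
        = ∑ m ∈ Icc 1 p, φ m t * x (t - m) :=
      sum_congr rfl fun j hj => by rw [tailCoeff_one _ _ _ (mem_Icc.1 hj).2]; ring_nf
    rw [htail, hx t]
    simp [xi_zero]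
  | succ N hN ih =>
    have hshift := sum_Icc_one_eq_add_sum_Icc_succ p
      (g := fun j => tailCoeff p φ t N j * x (t - N + 1 - j))
      (by simp [tailCoeff_of_lt])
    have hlead : t - N + 1 - ((1 : ℕ) : ℤ) = t - N := by push_cast; ring
    have htail : ∑ j ∈ Icc 1 p, tailCoeff p φ t (N + 1) j * x (t - (N + 1 : ℕ) + 1 - j)
        = ∑ j ∈ Icc 1 p, (xi p φ t N * (φ j (t - N) * x (t - N - j))
          + tailCoeff p φ t N (j + 1) * x (t - N + 1 - (j + 1 : ℕ))) :=
      sum_congr rfl fun j hj => by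
        rw [tailCoeff_succ _ _ _ _ (mem_Icc.1 hj).2]; push_cast; ring_nf
    rw [ih, hshift, tailCoeff_one_right _ _ _ hN, hlead, hx (t - N), htail, sum_add_distrib,
      ← mul_sum, sum_range_succ, sum_range_succ]
    ring

end Unrolling

section ConditionalExpectation

variable {Ω : Type*} {m m' m0 : MeasurableSpace Ω} {μ : Measure Ω}

lemma condExp_ae_eq_zero_of_le {f : Ω → ℝ} (hm : m ≤ m') (hm' : m' ≤ m0)
    [SigmaFinite (μ.trim hm')] (h : μ[f | m'] =ᵐ[μ] 0) : μ[f | m] =ᵐ[μ] 0 :=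
  calc μ[f | m] =ᵐ[μ] μ[μ[f | m'] | m] := (condExp_condExp_of_le hm hm').symm
    _ =ᵐ[μ] μ[0 | m] := condExp_congr_ae h
    _ = 0 := condExp_zero

lemma condExp_sum_mul_ae_eq_zero {ι : Type*} {s : Finset ι} (c : ι → ℝ) {f : ι → Ω → ℝ}
    (hf : ∀ i ∈ s, Integrable (f i) μ) (h : ∀ i ∈ s, μ[f i | m] =ᵐ[μ] 0) :
    μ[fun ω => ∑ i ∈ s, c i * f i ω | m] =ᵐ[μ] 0 := by
  have hsum : (fun ω => ∑ i ∈ s, c i * f i ω) = ∑ i ∈ s, c i • f i := by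
    ext ω; simp
  rw [hsum]
  refine (condExp_finsetSum (fun i hi => (hf i hi).smul (c i)) m).trans ?_
  refine (eventuallyEq_sum fun i hi => (condExp_smul (c i) (f i) m).trans
    ((h i hi).const_smul (c i))).trans ?_
  simp

lemma integral_mul_eq_zero_of_condExp_ae_eq_zero {f g : Ω → ℝ} (hm : m ≤ m0)
    [SigmaFinite (μ.trim hm)] (hf : StronglyMeasurable[m] f) (hfg : Integrable (f * g) μ)
    (hg : Integrable g μ) (h : μ[g | m] =ᵐ[μ] 0) : ∫ ω, f ω * g ω ∂μ = 0 :=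
  calc ∫ ω, f ω * g ω ∂μ = ∫ ω, μ[f * g | m] ω ∂μ := (integral_condExp hm).symm
    _ = ∫ ω, (f * μ[g | m]) ω ∂μ :=
        integral_congr_ae (condExp_mul_of_stronglyMeasurable_left hf hfg hg)
    _ = ∫ _, (0 : ℝ) ∂μ := integral_congr_ae (h.mono fun ω hω => by simp [hω])
    _ = 0 := integral_zero _ _

lemma sub_condExp_ae_eq_of_ae_eq_add {f g h : Ω → ℝ} (hm : m ≤ m0) [SigmaFinite (μ.trim hm)]
    (hg : StronglyMeasurable[m] g) (hgi : Integrable g μ) (hhi : Integrable h μ)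
    (hh : μ[h | m] =ᵐ[μ] 0) (hf : f =ᵐ[μ] g + h) : f - μ[f | m] =ᵐ[μ] h := by
  have hcond : μ[f | m] =ᵐ[μ] g :=
    calc μ[f | m] =ᵐ[μ] μ[g + h | m] := condExp_congr_ae hf
      _ =ᵐ[μ] μ[g | m] + μ[h | m] := condExp_add hgi hhi m
      _ =ᵐ[μ] g := by
        rw [condExp_of_stronglyMeasurable hm hg hgi]
        filter_upwards [hh] with ω hω
        simp [hω]
  filter_upwards [hf, hcond] with ω hf hcond
  simp [hf, hcond]

lemma integral_sq_sum_eq_of_pairwise_orthogonal {ι : Type*} {s : Finset ι} (c : ι → ℝ)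
    {f : ι → Ω → ℝ} (hf : ∀ i ∈ s, MemLp (f i) 2 μ)
    (horth : (s : Set ι).Pairwise fun i j => ∫ ω, f i ω * f j ω ∂μ = 0) :
    ∫ ω, (∑ i ∈ s, c i * f i ω) ^ 2 ∂μ = ∑ i ∈ s, c i ^ 2 * ∫ ω, f i ω ^ 2 ∂μ := by
  have hint : ∀ i ∈ s, ∀ j ∈ s, Integrable (fun ω => c i * c j * (f i ω * f j ω)) μ :=
    fun i hi j hj => ((hf i hi).integrable_mul (hf j hj)).const_mul _
  calc ∫ ω, (∑ i ∈ s, c i * f i ω) ^ 2 ∂μ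
      = ∫ ω, ∑ i ∈ s, ∑ j ∈ s, c i * c j * (f i ω * f j ω) ∂μ := by
        simp_rw [sq, sum_mul_sum, mul_mul_mul_comm]
    _ = ∑ i ∈ s, ∑ j ∈ s, c i * c j * ∫ ω, f i ω * f j ω ∂μ := by
        rw [integral_finsetSum _ fun i hi => integrable_finsetSum _ (hint i hi)]
        refine sum_congr rfl fun i hi => ?_
        rw [integral_finsetSum _ (hint i hi)]
        simp_rw [integral_const_mul]
    _ = ∑ i ∈ s, c i ^ 2 * ∫ ω, f i ω ^ 2 ∂μ := by
        refine sum_congr rfl fun i hi => ?_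
        rw [sum_eq_single_of_mem i hi fun j hj hji => by rw [horth hi hj hji.symm, mul_zero]]
        simp_rw [sq]

end ConditionalExpectation

section MartingaleDifference

variable {Ω : Type*} {m0 : MeasurableSpace Ω} {μ : Measure Ω} [IsFiniteMeasure μ]
  {𝓕 : Filtration ℤ m0} {ε : ℤ → Ω → ℝ}

lemma condExp_ae_eq_zero_of_lt (hεmart : ∀ τ : ℤ, μ[ε τ | 𝓕 (τ - 1)] =ᵐ[μ] 0) {s τ : ℤ}
    (hs : s < τ) : μ[ε τ | 𝓕 s] =ᵐ[μ] 0 :=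
  condExp_ae_eq_zero_of_le (𝓕.mono (by omega)) (𝓕.le _) (hεmart τ)

lemma integral_mul_eq_zero_of_ne (hεmeas : ∀ τ : ℤ, StronglyMeasurable[𝓕 τ] (ε τ))
    (hεL2 : ∀ τ : ℤ, MemLp (ε τ) 2 μ) (hεmart : ∀ τ : ℤ, μ[ε τ | 𝓕 (τ - 1)] =ᵐ[μ] 0)
    {τ τ' : ℤ} (hne : τ ≠ τ') : ∫ ω, ε τ ω * ε τ' ω ∂μ = 0 := by
  wlog hlt : τ < τ' generalizing τ τ'
  · rw [integral_congr_ae (.of_forall fun ω => mul_comm (ε τ ω) (ε τ' ω))]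
    exact this hne.symm (hne.lt_or_gt.resolve_left hlt)
  exact integral_mul_eq_zero_of_condExp_ae_eq_zero (𝓕.le τ) (hεmeas τ)
    ((hεL2 τ).integrable_mul (hεL2 τ')) ((hεL2 τ').integrable one_le_two)
    (condExp_ae_eq_zero_of_lt hεmart hlt)

end MartingaleDifference

theorem par_mean_square_error_general
    (p : ℕ) (φ : ℕ → ℤ → ℝ)
    {Ω : Type*} {m0 : MeasurableSpace Ω} {μ : Measure Ω} [IsProbabilityMeasure μ]
    (𝓕 : Filtration ℤ m0)
    (ε : ℤ → Ω → ℝ)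
    (hεmeas : ∀ τ : ℤ, StronglyMeasurable[𝓕 τ] (ε τ))
    (hεL2 : ∀ τ : ℤ, MemLp (ε τ) 2 μ)
    (hεmart : ∀ τ : ℤ, μ[ε τ | 𝓕 (τ - 1)] =ᵐ[μ] 0)
    (y : ℤ → Ω → ℝ)
    (hymeas : ∀ τ : ℤ, StronglyMeasurable[𝓕 τ] (y τ))
    (hyint : ∀ τ : ℤ, Integrable (y τ) μ)
    (hy : ∀ τ : ℤ, y τ =ᵐ[μ] fun ω =>
      φ 0 τ + (∑ m ∈ Finset.Icc 1 p, φ m τ * y (τ - m) ω) + ε τ ω)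
    (t : ℤ) (N : ℕ) (hN : 1 ≤ N) :
    ∫ ω, (y t ω - (μ[y t | 𝓕 (t - N)]) ω) ^ 2 ∂μ
      = ∑ r ∈ Finset.range N,
          (xi p φ t r) ^ 2 * ∫ ω, (ε (t - r) ω) ^ 2 ∂μ := by
  have hεint (τ : ℤ) : Integrable (ε τ) μ := (hεL2 τ).integrable one_le_two
  set G : Ω → ℝ := fun ω => ∑ r ∈ range N, xi p φ t r * φ 0 (t - r)
    + ∑ j ∈ Icc 1 p, tailCoeff p φ t N j * y (t - N + 1 - j) ω
  set E : Ω → ℝ := fun ω => ∑ r ∈ range N, xi p φ t r * ε (t - r) ω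
  have hdecomp : y t =ᵐ[μ] G + E := by
    filter_upwards [ae_all_iff.2 hy] with ω hω
    exact eq_sum_xi_add_sum_tailCoeff p φ t hω hN
  have hGmeas : StronglyMeasurable[𝓕 (t - N)] G :=
    stronglyMeasurable_const.add <| Finset.stronglyMeasurable_fun_sum _ fun j hj =>
      stronglyMeasurable_const.mul <| (hymeas _).mono <| 𝓕.mono <| by
        have := (mem_Icc.1 hj).1; omega
  have hGint : Integrable G μ :=
    (integrable_const _).add (integrable_finsetSum _ fun j _ => (hyint _).const_mul _)
  have hEint : Integrable E μ := integrable_finsetSum _ fun r _ => (hεint _).const_mul _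
  have hEcond : μ[E | 𝓕 (t - N)] =ᵐ[μ] 0 :=
    condExp_sum_mul_ae_eq_zero _ (fun r _ => hεint _)
      fun r hr => condExp_ae_eq_zero_of_lt hεmart (by have := mem_range.1 hr; omega)
  calc ∫ ω, (y t ω - μ[y t | 𝓕 (t - N)] ω) ^ 2 ∂μ = ∫ ω, E ω ^ 2 ∂μ :=
        integral_congr_ae <| (sub_condExp_ae_eq_of_ae_eq_add (𝓕.le _) hGmeas hGint hEint hEcond
          hdecomp).mono fun ω h => congrArg (· ^ 2) h
    _ = _ := integral_sq_sum_eq_of_pairwise_orthogonal _ (fun r _ => hεL2 _)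
        fun r _ r' _ hne => integral_mul_eq_zero_of_ne hεmeas hεL2 hεmart (by omega)

/-- The mean square error of the `N`-step-ahead predictor of a PAR(`p`) process. -/
theorem par_mean_square_error
    (p : ℕ) (hp : 1 ≤ p) (φ : ℕ → ℤ → ℝ)
    {Ω : Type*} {m0 : MeasurableSpace Ω} {μ : Measure Ω} [IsProbabilityMeasure μ]
    (𝓕 : Filtration ℤ m0)
    (ε : ℤ → Ω → ℝ)
    (hεmeas : ∀ τ : ℤ, StronglyMeasurable[𝓕 τ] (ε τ))
    (hεL2 : ∀ τ : ℤ, MemLp (ε τ) 2 μ)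
    (hεmart : ∀ τ : ℤ, μ[ε τ | 𝓕 (τ - 1)] =ᵐ[μ] 0)
    (y : ℤ → Ω → ℝ)
    (hymeas : ∀ τ : ℤ, StronglyMeasurable[𝓕 τ] (y τ))
    (hyint : ∀ τ : ℤ, Integrable (y τ) μ)
    (hy : ∀ τ : ℤ, y τ =ᵐ[μ] fun ω =>
      φ 0 τ + (∑ m ∈ Finset.Icc 1 p, φ m τ * y (τ - m) ω) + ε τ ω)
    (t : ℤ) (N : ℕ) (hN : 1 ≤ N) :
    ∫ ω, (y t ω - (μ[y t | 𝓕 (t - N)]) ω) ^ 2 ∂μ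
      = ∑ r ∈ Finset.range N,
          (xi p φ t r) ^ 2 * ∫ ω, (ε (t - r) ω) ^ 2 ∂μ :=
  par_mean_square_error_general p φ 𝓕 ε hεmeas hεL2 hεmart y hymeas hyint hy t N hN
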